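/- Let a ∈ ℝ, α ∈ (0,1), β ∈ ℝ, γ = (1−α)/(2−α), and let f : ℝ → ℝ be f(y) = (a/2)y². Then for all x, c with x ≠ c: δ^{α,β}_c f(x) = a(β−γ)(x−c) + a·x. -/

import Mathlib

/-- The Caputo fractional derivative of order `α ∈ (0,1)` with terminal `c`. -/
noncomputable def caputo (α c : ℝ) (f : ℝ → ℝ) (x : ℝ) : ℝ :=
  (1 / Real.Gamma (1 - α)) * ∫ t in c..x, deriv f t / |x - t| ^ α

/-- The Caputo fractional derivative of order `1 + α` (for `α ∈ (0,1)`) with terminal `c`. -/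
noncomputable def caputoSucc (α c : ℝ) (f : ℝ → ℝ) (x : ℝ) : ℝ :=
  (Real.sign (x - c) / Real.Gamma (1 - α)) *
    ∫ t in c..x, deriv (deriv f) t / |x - t| ^ α

/-- The fractional gradient operator `δ^{α,β}_c f (x)`, with the convention that it is `0`
when `x = c`. -/
noncomputable def fracGrad (α β c : ℝ) (f : ℝ → ℝ) (x : ℝ) : ℝ :=
  if x = c then 0
  else (Real.Gamma (2 - α) * |x - c| ^ α / (x - c)) *
    (caputo α c f x + β * |x - c| * caputoSucc α c f x)

/-- `f : ℝ → ℝ` is `L`-smooth. -/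
def RSmooth (L : ℝ) (f : ℝ → ℝ) : Prop :=
  ∀ x y : ℝ, |f y - f x - deriv f x * (y - x)| ≤ L / 2 * (y - x) ^ 2

/-- `f : ℝ → ℝ` is `μ`-strongly convex. -/
def RStrongConvex (μ : ℝ) (f : ℝ → ℝ) : Prop :=
  ∀ x y : ℝ, μ / 2 * (y - x) ^ 2 ≤ f y - f x - deriv f x * (y - x)

/-! Substituting `u = x - t`, both Caputo integrals of `y ↦ a/2 · y²` become integrals of
`|u|^(-α)` and `u · |u|^(-α)` over `[0, h]`, `h = x - c`; these equal `h|h|^(-α)/(1-α)` and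
`h²|h|^(-α)/(2-α)` for either sign of `h`. Since `Γ(2-α) = (1-α)Γ(1-α)`, the prefactor
`Γ(2-α)|h|^α/h` of `δ^{α,β}_c` then cancels down to the affine expression. -/

open intervalIntegral Real Set

lemma integral_abs_rpow {r : ℝ} (hr : -1 < r) (h : ℝ) :
    ∫ u in (0 : ℝ)..h, |u| ^ r = h * |h| ^ r / (r + 1) := by
  wlog hh : 0 ≤ h generalizing h
  · have hneg := this (-h) (by linarith)
    rw [← neg_zero, ← integral_comp_neg] at hneg
    simpa only [abs_neg, integral_symm 0 h, neg_mul, neg_div, neg_inj] using hneg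
  calc ∫ u in (0 : ℝ)..h, |u| ^ r = ∫ u in (0 : ℝ)..h, u ^ r :=
        integral_congr fun u hu => by
          rw [uIcc_of_le hh] at hu
          rw [abs_of_nonneg hu.1]
    _ = h * |h| ^ r / (r + 1) := by
      rw [integral_rpow (Or.inl hr), zero_rpow (by linarith), rpow_add_one' hh (by linarith),
        abs_of_nonneg hh]
      ring

lemma integral_mul_abs_rpow {r : ℝ} (hr : -2 < r) (h : ℝ) :
    ∫ u in (0 : ℝ)..h, u * |u| ^ r = h ^ 2 * |h| ^ r / (r + 2) := by
  wlog hh : 0 ≤ h generalizing h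
  · have hneg := this (-h) (by linarith)
    rw [← neg_zero, ← integral_comp_neg] at hneg
    simpa only [abs_neg, neg_mul, integral_neg, neg_sq, integral_symm 0 h, neg_neg] using hneg
  calc ∫ u in (0 : ℝ)..h, u * |u| ^ r = ∫ u in (0 : ℝ)..h, u ^ (r + 1) :=
        integral_congr_ae <| .of_forall fun u hu => by
          rw [uIoc_of_le hh] at hu
          rw [abs_of_pos hu.1, rpow_add_one hu.1.ne', mul_comm]
    _ = h ^ 2 * |h| ^ r / (r + 2) := by
      rw [integral_rpow (Or.inl (by linarith)), zero_rpow (by linarith), add_assoc,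
        one_add_one_eq_two, rpow_add' hh (by linarith), rpow_two, abs_of_nonneg hh]
      ring

lemma intervalIntegrable_abs_rpow {r : ℝ} (hr : -1 < r) (h : ℝ) :
    IntervalIntegrable (fun u => |u| ^ r) MeasureTheory.volume 0 h := by
  rcases eq_or_ne h 0 with rfl | hh
  · exact .refl
  · refine intervalIntegrable_of_integral_ne_zero ?_
    rw [integral_abs_rpow hr]
    have : 0 < |h| ^ r := rpow_pos_of_pos (abs_pos.2 hh) r
    exact div_ne_zero (mul_ne_zero hh this.ne') (by linarith)

lemma intervalIntegrable_mul_abs_rpow {r : ℝ} (hr : -2 < r) (h : ℝ) :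
    IntervalIntegrable (fun u => u * |u| ^ r) MeasureTheory.volume 0 h := by
  rcases eq_or_ne h 0 with rfl | hh
  · exact .refl
  · refine intervalIntegrable_of_integral_ne_zero ?_
    rw [integral_mul_abs_rpow hr]
    have : 0 < |h| ^ r := rpow_pos_of_pos (abs_pos.2 hh) r
    exact div_ne_zero (mul_ne_zero (pow_ne_zero 2 hh) this.ne') (by linarith)

lemma Real.sign_mul_self (r : ℝ) : Real.sign r * r = |r| := by
  rcases lt_trichotomy r 0 with hr | rfl | hr
  · rw [sign_of_neg hr, abs_of_neg hr, neg_one_mul]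
  · simp
  · rw [sign_of_pos hr, abs_of_pos hr, one_mul]

lemma deriv_half_mul_sq (a : ℝ) : deriv (fun y : ℝ => a / 2 * y ^ 2) = fun t => a * t := by
  funext t
  rw [deriv_const_mul_field, deriv_pow_field]
  ring

section Quadratic

variable {α : ℝ} (a c x : ℝ)

lemma caputo_half_mul_sq (hα : α < 1) :
    caputo α c (fun y => a / 2 * y ^ 2) x =
      a * (x - c) * |x - c| ^ (-α) * (x / (1 - α) - (x - c) / (2 - α)) / Gamma (1 - α) := by
  have hsubst : ∫ t in c..x, a * t / |x - t| ^ α =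
      ∫ t in c..x, (fun u => a * x * |u| ^ (-α) - a * (u * |u| ^ (-α))) (x - t) :=
    integral_congr fun t _ => by
      dsimp only
      rw [rpow_neg (abs_nonneg _)]
      ring
  rw [caputo, deriv_half_mul_sq, hsubst,
    integral_comp_sub_left (fun u => a * x * |u| ^ (-α) - a * (u * |u| ^ (-α))), sub_self,
    integral_sub ((intervalIntegrable_abs_rpow (by linarith) _).const_mul _)
      ((intervalIntegrable_mul_abs_rpow (by linarith) _).const_mul _),
    integral_const_mul, integral_const_mul, integral_abs_rpow (by linarith),
    integral_mul_abs_rpow (by linarith)]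
  ring

lemma caputoSucc_half_mul_sq (hα : α < 1) :
    caputoSucc α c (fun y => a / 2 * y ^ 2) x =
      a * |x - c| * |x - c| ^ (-α) / (1 - α) / Gamma (1 - α) := by
  have hderiv2 : deriv (deriv fun y : ℝ => a / 2 * y ^ 2) = fun _ => a := by
    rw [deriv_half_mul_sq, deriv_const_mul_field', deriv_id'']
    simp
  have hsubst : ∫ t in c..x, a / |x - t| ^ α = ∫ t in c..x, (fun u => a * |u| ^ (-α)) (x - t) :=
    integral_congr fun t _ => by
      dsimp only
      rw [rpow_neg (abs_nonneg _), div_eq_mul_inv]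
  rw [caputoSucc, hderiv2, hsubst, integral_comp_sub_left (fun u => a * |u| ^ (-α)), sub_self,
    integral_const_mul, integral_abs_rpow (by linarith)]
  linear_combination a * |x - c| ^ (-α) / (1 - α) / Gamma (1 - α) * Real.sign_mul_self (x - c)

end Quadratic

/-- explicit value of the fractional gradient operator on the quadratic
`y ↦ (a/2)·y²`. -/
theorem fracGrad_quadratic (a α β γ : ℝ) (hα : α ∈ Set.Ioo (0 : ℝ) 1)
    (hγ : γ = (1 - α) / (2 - α)) (f : ℝ → ℝ) (hf : f = fun y => a / 2 * y ^ 2) :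
    ∀ x c : ℝ, x ≠ c → fracGrad α β c f x = a * (β - γ) * (x - c) + a * x := by
  intro x c hxc
  subst hf hγ
  have hh : x - c ≠ 0 := sub_ne_zero.2 hxc
  have hpow : |x - c| ^ α * |x - c| ^ (-α) = 1 := by
    rw [rpow_neg (abs_nonneg _), mul_inv_cancel₀ (rpow_pos_of_pos (abs_pos.2 hh) _).ne']
  have h1α : 1 - α ≠ 0 := by linarith [hα.2]
  have h2α : 2 - α ≠ 0 := by linarith [hα.2]
  have hΓ : Gamma (2 - α) = (1 - α) * Gamma (1 - α) := by
    rw [show 2 - α = (1 - α) + 1 by ring, Gamma_add_one h1α]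
  have hΓ_ne : Gamma (1 - α) ≠ 0 := (Gamma_pos_of_pos (sub_pos.2 hα.2)).ne'
  rw [fracGrad, if_neg hxc, caputo_half_mul_sq _ _ _ hα.2, caputoSucc_half_mul_sq _ _ _ hα.2, hΓ]
  field_simp
  rw [sq_abs]
  linear_combination
    a * ((x - c) * (x * (2 - α) - (1 - α) * (x - c)) + (2 - α) * β * (x - c) ^ 2) * hpow
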